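/- For all nonnegative integers a ≥ b, the Stirling-Carlitz number of the first kind satisfies S1_C(r^a, r^b) = (D_a/D_b) · (−1)^{a−b} / L_{a−b}^{r^b}. -/

import Mathlib

open scoped Classical
open PowerSeries Finset

noncomputable section

variable (F : Type) [Field F] [Fintype F]

/-- The rational function field `K = 𝔽_r(T)`. -/
abbrev K : Type := RatFunc F

/-- `r`, the cardinality of the finite field of constants. -/
def rr : ℕ := Fintype.card F

/-- The variable `T` of the rational function field. -/
def Tv : K F := RatFunc.X

/-- `[i] = T^{r^i} - T`. -/
def br (i : ℕ) : K F := Tv F ^ (rr F) ^ i - Tv F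

/-- `D_0 = 1`, `D_i = [i] · D_{i-1}^r`. -/
def D : ℕ → K F
  | 0 => 1
  | i + 1 => br F (i + 1) * D i ^ rr F

/-- `L_0 = 1`, `L_i = [i] · L_{i-1}`. -/
def L : ℕ → K F
  | 0 => 1
  | i + 1 => br F (i + 1) * L i

/-- The Carlitz factorial `Π(n) = ∏_j D_j^{c_j}`, where `c_j = n / r^j % r` are the
base-`r` digits of `n` (all digits with index `> n` vanish since `r ≥ 2`). -/
def Cf (n : ℕ) : K F := ∏ j ∈ Finset.range (n + 1), D F j ^ (n / (rr F) ^ j % rr F)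

/-- The Carlitz logarithm `log_C(z) = Σ_{i ≥ 0} (-1)^i z^{r^i} / L_i`: the coefficient of
`z^m` is `(-1)^i / L_i` if `m = r^i` and `0` otherwise (note `i ≤ r^i = m` since `r ≥ 2`). -/
def logC : PowerSeries (K F) :=
  PowerSeries.mk fun m =>
    ∑ i ∈ Finset.range (m + 1), if m = (rr F) ^ i then (-1 : K F) ^ i / L F i else 0

/-- The Carlitz exponential `e_C(z) = Σ_{i ≥ 0} z^{r^i} / D_i`. -/
def eC : PowerSeries (K F) :=
  PowerSeries.mk fun m =>
    ∑ i ∈ Finset.range (m + 1), if m = (rr F) ^ i then 1 / D F i else 0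

/-- The power series `log_C(z)/z`. -/
def logCdivZ : PowerSeries (K F) :=
  PowerSeries.mk fun n => PowerSeries.coeff (n + 1) (logC F)

/-- The power series `e_C(z)/z`. -/
def eCdivZ : PowerSeries (K F) :=
  PowerSeries.mk fun n => PowerSeries.coeff (n + 1) (eC F)

/-! Over a ring of characteristic `p`, the `p^n`-th power of a power series raises its
coefficients to the `p^n`-th power and moves the coefficient of `z^m` to `z^(p^n m)`.
As `r^b` is a power of `p`, the coefficient of `z^(r^a)` in `log_C(z)^(r^b)` is the `r^b`-th
power of the coefficient `(-1)^(a-b) / L_(a-b)` of `z^(r^(a-b))` in `log_C`; and the Carlitz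
factorial of `r^a` is `D_a`, its only nonzero digit being a `1` in position `a`. -/

theorem PowerSeries.coeff_pow_mul_pow_expChar {R : Type*} [CommRing R] (p : ℕ) [ExpChar R p]
    (f : R⟦X⟧) (n m : ℕ) : coeff (p ^ n * m) (f ^ p ^ n) = coeff m f ^ p ^ n := by
  have hp : p ≠ 0 := expChar_ne_zero R p
  rw [← MvPowerSeries.map_iterateFrobenius_expand p hp f n]
  exact congrArg (iterateFrobenius R p n) (coeff_expand_mul (p ^ n) (pow_ne_zero n hp) f m)

section FiniteFieldAlgebra

variable {k R : Type*} [Field k] [Fintype k] [CommRing R] [Algebra k R]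

theorem PowerSeries.coeff_pow_mul_pow_card_pow (f : R⟦X⟧) (n m : ℕ) :
    coeff (Fintype.card k ^ n * m) (f ^ Fintype.card k ^ n) =
      coeff m f ^ Fintype.card k ^ n := by
  obtain ⟨p, _, s, hp, hcard⟩ := FiniteField.card' k
  nontriviality R
  have : CharP R p := charP_of_injective_algebraMap' k p
  have : ExpChar R p := .prime hp
  rw [hcard, ← pow_mul]
  exact coeff_pow_mul_pow_expChar p f _ m

variable (k) in
theorem neg_one_pow_card_pow (n : ℕ) : (-1 : R) ^ Fintype.card k ^ n = -1 := by
  simpa using congrArg (algebraMap k R) (FiniteField.pow_card_pow n (-1 : k))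

end FiniteFieldAlgebra

lemma two_le_rr : 2 ≤ rr F := Fintype.one_lt_card

lemma br_ne_zero {i : ℕ} (hi : i ≠ 0) : br F i ≠ 0 := by
  have h : br F i = algebraMap (Polynomial F) (K F) (Polynomial.X ^ rr F ^ i - Polynomial.X) := by
    rw [br, Tv, map_sub, map_pow, RatFunc.algebraMap_X]
  rw [h]
  exact RatFunc.algebraMap_ne_zero (FiniteField.X_pow_card_pow_sub_X_ne_zero F hi (two_le_rr F))

lemma D_ne_zero (i : ℕ) : D F i ≠ 0 := by
  induction i with
  | zero => exact one_ne_zero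
  | succ i ih => exact mul_ne_zero (br_ne_zero F i.succ_ne_zero) (pow_ne_zero _ ih)

lemma Cf_rr_pow (a : ℕ) : Cf F (rr F ^ a) = D F a := by
  have hr := two_le_rr F
  rw [Cf, Finset.prod_eq_single_of_mem a (mem_range.2 (Nat.lt_succ_of_lt (Nat.lt_pow_self hr)))]
  · rw [Nat.div_self (by positivity), Nat.mod_eq_of_lt hr, pow_one]
  · intro j _ hj
    rcases hj.lt_or_gt with hj | hj
    · rw [Nat.pow_div hj.le (by omega), Nat.mod_eq_zero_of_dvd (dvd_pow_self _ (by omega)),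
        pow_zero]
    · rw [Nat.div_eq_of_lt (Nat.pow_lt_pow_right hr hj), Nat.zero_mod, pow_zero]

lemma coeff_rr_pow_logC (j : ℕ) : coeff (rr F ^ j) (logC F) = (-1 : K F) ^ j / L F j := by
  have hr := two_le_rr F
  rw [logC, coeff_mk, Finset.sum_eq_single_of_mem j
    (mem_range.2 (Nat.lt_succ_of_lt (Nat.lt_pow_self hr))), if_pos rfl]
  intro i _ hij
  rw [if_neg fun h => hij (Nat.pow_right_injective hr h.symm)]

lemma coeff_rr_pow_logC_pow {a b : ℕ} (hab : b ≤ a) :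
    coeff (rr F ^ a) (logC F ^ rr F ^ b) = (-1 : K F) ^ (a - b) / L F (a - b) ^ rr F ^ b := by
  obtain ⟨c, rfl⟩ := Nat.exists_eq_add_of_le hab
  have hfrob : coeff (rr F ^ b * rr F ^ c) (logC F ^ rr F ^ b) =
      coeff (rr F ^ c) (logC F) ^ rr F ^ b :=
    PowerSeries.coeff_pow_mul_pow_card_pow _ _ _
  have hsign : (-1 : K F) ^ rr F ^ b = -1 := neg_one_pow_card_pow F b
  rw [Nat.add_sub_cancel_left, pow_add, hfrob, coeff_rr_pow_logC, div_pow, ← pow_mul, mul_comm,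
    pow_mul, hsign]

/-- For `a ≥ b`, `S1_C(r^a, r^b) = (D_a / D_b) · (-1)^{a-b} / L_{a-b}^{r^b}`. -/
theorem stirlingCarlitzFirst_pow_pow
    (S1C : ℕ → ℕ → K F)
    (hS1C : ∀ n k : ℕ,
      PowerSeries.coeff n (logC F ^ k) / Cf F k = S1C n k / Cf F n)
    (a b : ℕ) (hab : b ≤ a) :
    S1C ((rr F) ^ a) ((rr F) ^ b) =
      D F a / D F b * ((-1 : K F) ^ (a - b) / L F (a - b) ^ (rr F) ^ b) := by
  have h := hS1C (rr F ^ a) (rr F ^ b)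
  rw [Cf_rr_pow, Cf_rr_pow, coeff_rr_pow_logC_pow F hab, eq_div_iff (D_ne_zero F a)] at h
  rw [← h]
  ring
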